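/- Let m ≥ 1 and let f be an elliptical density on ℝ^m (with location μ, positive definite scatter V and density generator φ) such that all moments of f are finite and f is positive on a nonempty open subset of ℝ^m. Then for every k ≥ 0, the dimension of Π_k equals the binomial coefficient C(m+k−1, k). -/

import Mathlib

open MeasureTheory Matrix Finset

noncomputable section

/-- Normalizing constant `c_m` of the elliptical density with generator `φ`. -/
def cm (m : ℕ) (φ : ℝ → ℝ) : ℝ :=
  Real.Gamma ((m : ℝ) / 2) /
    (Real.pi ^ ((m : ℝ) / 2) * ∫ y in Set.Ioi (0 : ℝ), y ^ ((m : ℝ) / 2 - 1) * φ y)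

/-- The elliptical density with location `μ`, scatter matrix `V` and generator `φ`. -/
def ellDensity (m : ℕ) (φ : ℝ → ℝ) (μ : Fin m → ℝ) (V : Matrix (Fin m) (Fin m) ℝ)
    (x : Fin m → ℝ) : ℝ :=
  cm m φ * Real.sqrt (V⁻¹).det *
    φ (dotProduct (x - μ) ((V⁻¹).mulVec (x - μ)))

/-- `f` is an elliptical density (arbitrary location, positive definite scatter,
density generator), has all moments finite, and is positive on a nonempty open set. -/
def IsNiceElliptical (m : ℕ) (f : (Fin m → ℝ) → ℝ) : Prop :=
  (∃ (μ : Fin m → ℝ) (V : Matrix (Fin m) (Fin m) ℝ) (φ : ℝ → ℝ),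
      V.PosDef ∧ Measurable φ ∧ (∀ y, 0 ≤ φ y) ∧
      IntegrableOn (fun y => y ^ ((m : ℝ) / 2 - 1) * φ y) (Set.Ioi 0) ∧
      (0 < ∫ y in Set.Ioi (0 : ℝ), y ^ ((m : ℝ) / 2 - 1) * φ y) ∧
      f = ellDensity m φ μ V) ∧
    (∀ N : ℕ, Integrable fun x : Fin m → ℝ => ‖x‖ ^ N * f x) ∧
    ∃ U : Set (Fin m → ℝ), IsOpen U ∧ U.Nonempty ∧ ∀ x ∈ U, 0 < f x

/-- `P_k`: the set of functions on `ℝ^m` given by polynomials of total degree at most `k`. -/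
def PkSet (m k : ℕ) : Set ((Fin m → ℝ) → ℝ) :=
  {g | ∃ p : MvPolynomial (Fin m) ℝ, p.totalDegree ≤ k ∧ ∀ x, g x = MvPolynomial.eval x p}

/-- The affine-linear transformation `γ(x) = A (x + b)`. -/
def affMap (m : ℕ) (A : Matrix (Fin m) (Fin m) ℝ) (b : Fin m → ℝ) (x : Fin m → ℝ) :
    Fin m → ℝ :=
  A.mulVec (x + b)

/-- The subspaces `Π_k`, defined recursively: `Π_0 = P_0` and, for `k ≥ 1`, `Π_k` is the
set of `p ∈ P_k` such that `∫ p(x) q(γ(x)) f(x) dx = 0` for every `q ∈ Π_{k'}` with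
`k' < k` and every affine-linear `γ ∈ AL(m)`. -/
def PiK (m : ℕ) (f : (Fin m → ℝ) → ℝ) : ℕ → Set ((Fin m → ℝ) → ℝ)
  | 0 => PkSet m 0
  | k + 1 =>
      {p | p ∈ PkSet m (k + 1) ∧
        ∀ k' : ℕ, k' < k + 1 → ∀ q ∈ PiK m f k',
          ∀ A : Matrix (Fin m) (Fin m) ℝ, IsUnit A.det → ∀ b : Fin m → ℝ,
            (∫ x, p x * q (affMap m A b x) * f x) = 0}
  termination_by k => k
  decreasing_by omega

/-!
On polynomials, `B p q = ∫ p q f` is a symmetric bilinear form, and it is anisotropic: if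
`∫ p² f = 0` then `p` vanishes on the open set where `f > 0`, hence `p = 0`. By induction on `k`,
`Π_k` consists of the polynomials of degree `≤ k` that are `B`-orthogonal to `P_{k-1}`: the
condition with `γ = id` gives orthogonality to `Π_0, …, Π_{k-1}`, which together span `P_{k-1}`,
and conversely `q ∘ γ` has the same degree as `q` for affine `γ`. Hence
`dim Π_k = dim P_k - dim P_{k-1}`, the number of monomials of degree exactly `k`, which is
`C(m + k - 1, k)`.
-/

open MvPolynomial Module

namespace MvPolynomial

theorem finrank_restrictTotalDegree (σ K : Type*) [Fintype σ] [Field K] (k : ℕ) :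
    finrank K (restrictTotalDegree σ K k) =
      ∑ j ∈ range (k + 1), (Fintype.card σ + j - 1).choose j := by
  classical
  have hmonomials : {d : σ →₀ ℕ | (d.sum fun _ e => e) ≤ k} =
      ↑((range (k + 1)).biUnion fun j => (univ : Finset σ).finsuppAntidiag j) := by
    ext d
    simp [Finsupp.sum_fintype]
  rw [restrictTotalDegree, finrank_eq_nat_card_basis (basisRestrictSupport K _), hmonomials,
    Nat.card_coe_set_eq, Set.ncard_coe_finset, card_biUnion]
  · simp [card_finsuppAntidiag_nat_eq_choose]
  · intro i _ j _ hij
    refine Finset.disjoint_left.mpr fun d hi hj => hij ?_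
    rw [mem_finsuppAntidiag] at hi hj
    exact hi.1.symm.trans hj.1

theorem finrank_restrictTotalDegree_succ (σ K : Type*) [Fintype σ] [Field K] (k : ℕ) :
    finrank K (restrictTotalDegree σ K (k + 1)) =
      finrank K (restrictTotalDegree σ K k) + (Fintype.card σ + k).choose (k + 1) := by
  rw [finrank_restrictTotalDegree, finrank_restrictTotalDegree, sum_range_succ _ (k + 1),
    Nat.add_succ_sub_one]

theorem restrictTotalDegree_mono (σ R : Type*) [CommSemiring R] :
    Monotone (restrictTotalDegree σ R) := fun _ _ hjk _ hp => by
  rw [mem_restrictTotalDegree] at hp ⊢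
  exact hp.trans hjk

theorem totalDegree_bind₁_le {R σ τ : Type*} [CommSemiring R] {g : σ → MvPolynomial τ R}
    (hg : ∀ i, (g i).totalDegree ≤ 1) (q : MvPolynomial σ R) :
    (bind₁ g q).totalDegree ≤ q.totalDegree := by
  conv_lhs => rw [q.as_sum, map_sum]
  refine totalDegree_finsetSum_le fun d hd => ?_
  rw [bind₁_monomial]
  calc (C (coeff d q) * ∏ i ∈ d.support, g i ^ d i).totalDegree
      ≤ ∑ i ∈ d.support, (g i ^ d i).totalDegree := by
        refine (totalDegree_mul _ _).trans ?_
        rw [totalDegree_C, zero_add]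
        exact totalDegree_finsetProd _ _
    _ ≤ ∑ i ∈ d.support, d i := sum_le_sum fun i _ =>
        (totalDegree_pow _ _).trans (by simpa using Nat.mul_le_mul_left (d i) (hg i))
    _ ≤ q.totalDegree := le_totalDegree hd

theorem evalₗ_injective (σ : Type*) : Function.Injective (evalₗ ℝ σ) :=
  fun _ _ h => funext fun x => congrFun h x

end MvPolynomial

namespace LinearMap.BilinForm

variable {K M : Type*} [Field K] [AddCommGroup M] [Module K M] {B : LinearMap.BilinForm K M}

theorem inf_orthogonal_self_eq_bot (hB : B.toQuadraticMap.Anisotropic) (W : Submodule K M) :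
    W ⊓ B.orthogonal W = ⊥ :=
  (Submodule.eq_bot_iff _).mpr fun x ⟨hxW, hxO⟩ => hB x (hxO x hxW)

theorem finrank_inf_orthogonal_add_finrank (hB : B.toQuadraticMap.Anisotropic)
    {V W : Submodule K M} (hWV : W ≤ V) [FiniteDimensional K V] :
    finrank K ↥(V ⊓ B.orthogonal W) + finrank K W = finrank K V := by
  set W' := W.comap V.subtype
  have hker : LinearMap.ker (B.restrict V) = ⊥ :=
    LinearMap.separatingLeft_iff_ker_eq_bot.mp
      (separatingLeft_of_anisotropic fun x hx => Subtype.ext (hB x hx))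
  have hdim := finrank_add_finrank_orthogonal' (B := B.restrict V) W'
  rw [hker, inf_bot_eq, finrank_bot, add_zero,
    (Submodule.comapSubtypeEquivOfLe hWV).finrank_eq] at hdim
  have hmap : ((B.restrict V).orthogonal W').map V.subtype = V ⊓ B.orthogonal W := by
    ext x
    simp only [Submodule.mem_map, Submodule.mem_inf, mem_orthogonal_iff, W',
      Submodule.mem_comap, Submodule.subtype_apply, restrict_apply, domRestrict_apply,
      Subtype.forall]
    constructor
    · rintro ⟨⟨y, hyV⟩, hy, rfl⟩
      exact ⟨hyV, fun n hn => hy n (hWV hn) hn⟩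
    · rintro ⟨hxV, hx⟩
      exact ⟨⟨x, hxV⟩, fun n _ hn => hx n hn, rfl⟩
  rw [← hmap, Submodule.finrank_map_subtype_eq]
  omega

theorem sup_inf_orthogonal_eq (hB : B.toQuadraticMap.Anisotropic)
    {V W : Submodule K M} (hWV : W ≤ V) [FiniteDimensional K V] :
    W ⊔ (V ⊓ B.orthogonal W) = V := by
  have : FiniteDimensional K W := Submodule.finiteDimensional_of_le hWV
  have hdisj : W ⊓ (V ⊓ B.orthogonal W) = ⊥ :=
    eq_bot_iff.mpr <| (inf_le_inf_left W inf_le_right).trans (inf_orthogonal_self_eq_bot hB W).le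
  refine Submodule.eq_of_le_of_finrank_le (sup_le hWV inf_le_left) ?_
  have hsup := Submodule.finrank_sup_add_finrank_inf_eq W (V ⊓ B.orthogonal W)
  rw [hdisj, finrank_bot] at hsup
  have := finrank_inf_orthogonal_add_finrank hB hWV
  omega

variable (B) in
def orthogonalLayer (P : ℕ → Submodule K M) : ℕ → Submodule K M
  | 0 => P 0
  | k + 1 => P (k + 1) ⊓ B.orthogonal (P k)

theorem orthogonalLayer_le (P : ℕ → Submodule K M) (k : ℕ) : B.orthogonalLayer P k ≤ P k := by
  cases k with
  | zero => exact le_rfl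
  | succ k => exact inf_le_left

variable {P : ℕ → Submodule K M} [∀ k, FiniteDimensional K (P k)]

theorem sup_orthogonalLayer_succ (hB : B.toQuadraticMap.Anisotropic) (hP : Monotone P) (k : ℕ) :
    P k ⊔ B.orthogonalLayer P (k + 1) = P (k + 1) :=
  sup_inf_orthogonal_eq hB (hP k.le_succ)

theorem finrank_orthogonalLayer_succ_add (hB : B.toQuadraticMap.Anisotropic) (hP : Monotone P)
    (k : ℕ) : finrank K (B.orthogonalLayer P (k + 1)) + finrank K (P k) = finrank K (P (k + 1)) :=
  finrank_inf_orthogonal_add_finrank hB (hP k.le_succ)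

theorem mem_orthogonal_iff_forall_orthogonalLayer (hB : B.toQuadraticMap.Anisotropic)
    (hP : Monotone P) {k : ℕ} {x : M} :
    x ∈ B.orthogonal (P k) ↔ ∀ j ≤ k, ∀ y ∈ B.orthogonalLayer P j, B y x = 0 := by
  refine ⟨fun hx j hjk y hy => hx y (hP hjk (orthogonalLayer_le P j hy)), fun hx => ?_⟩
  induction k with
  | zero => exact hx 0 le_rfl
  | succ k ih =>
    intro y hy
    rw [← sup_orthogonalLayer_succ hB hP k] at hy
    obtain ⟨a, ha, c, hc, rfl⟩ := Submodule.mem_sup.mp hy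
    rw [map_add, LinearMap.add_apply, ih (fun j hj => hx j (hj.trans k.le_succ)) a ha,
      hx (k + 1) le_rfl c hc, add_zero]

end LinearMap.BilinForm

namespace MvPolynomial

variable {σ : Type*} [Fintype σ]

theorem eq_zero_of_forall_mem_eval_eq_zero {U : Set (σ → ℝ)} (hU : IsOpen U) (hne : U.Nonempty)
    {p : MvPolynomial σ ℝ} (h : ∀ x ∈ U, eval x p = 0) : p = 0 := by
  obtain ⟨x₀, hx₀⟩ := hne
  obtain ⟨ε, hε, hball⟩ := Metric.isOpen_iff.mp hU x₀ hx₀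
  refine funext_set (fun i => Metric.ball (x₀ i) ε)
    (fun i => by rw [Real.ball_eq_Ioo]; exact Set.Ioo_infinite (by linarith)) fun x hx => ?_
  rw [map_zero]
  exact h x (hball (by rwa [ball_pi _ hε]))

variable {f : (σ → ℝ) → ℝ} (hmom : ∀ N : ℕ, Integrable fun x : σ → ℝ => ‖x‖ ^ N * f x)
include hmom

theorem integrable_prod_pow_mul (d : σ → ℕ) :
    Integrable fun x : σ → ℝ => (∏ i, x i ^ d i) * f x := by
  have hf : AEStronglyMeasurable f := by simpa using (hmom 0).aestronglyMeasurable
  refine (hmom (∑ i, d i)).mono ((by fun_prop : Continuous _).aestronglyMeasurable.mul hf)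
    (ae_of_all _ fun x => ?_)
  rw [norm_mul, norm_mul, norm_pow, norm_norm]
  gcongr
  calc ‖∏ i, x i ^ d i‖ = ∏ i, ‖x i‖ ^ d i := by simp only [norm_prod, norm_pow]
    _ ≤ ∏ i, ‖x‖ ^ d i := by gcongr with i; exact norm_le_pi_norm x i
    _ = ‖x‖ ^ ∑ i, d i := prod_pow_eq_pow_sum _ _ _

theorem integrable_eval_mul (p : MvPolynomial σ ℝ) :
    Integrable fun x : σ → ℝ => eval x p * f x := by
  simp_rw [eval_eq', Finset.sum_mul, mul_assoc]
  exact integrable_finsetSum _ fun d _ => (integrable_prod_pow_mul hmom d).const_mul _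

def momentFunctional : MvPolynomial σ ℝ →ₗ[ℝ] ℝ where
  toFun p := ∫ x, eval x p * f x
  map_add' p q := by
    simp only [map_add, add_mul]
    exact integral_add (integrable_eval_mul hmom p) (integrable_eval_mul hmom q)
  map_smul' c p := by
    simp only [smul_eval, mul_assoc, integral_const_mul]
    rfl

def momentForm : LinearMap.BilinForm ℝ (MvPolynomial σ ℝ) :=
  (LinearMap.mul ℝ _).compr₂ (momentFunctional hmom)

theorem momentForm_apply (p q : MvPolynomial σ ℝ) :
    momentForm hmom p q = ∫ x, eval x p * eval x q * f x := by
  simp [momentForm, momentFunctional]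

theorem momentForm_anisotropic (hf : ∀ x, 0 ≤ f x) {U : Set (σ → ℝ)} (hU : IsOpen U)
    (hne : U.Nonempty) (hpos : ∀ x ∈ U, 0 < f x) :
    (momentForm hmom).toQuadraticMap.Anisotropic := by
  intro p hp
  have hsq : ∫ x, eval x (p * p) * f x = 0 := by
    simpa [momentForm_apply] using hp
  have hae := (integral_eq_zero_iff_of_nonneg
    (fun x => by simpa using mul_nonneg (mul_self_nonneg (eval x p)) (hf x))
    (integrable_eval_mul hmom (p * p))).mp hsq
  have hnull : volume (U ∩ {x | eval x p ≠ 0}) = 0 :=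
    measure_mono_null (fun x ⟨hxU, hx⟩ => by simpa [(hpos x hxU).ne'] using hx) (ae_iff.mp hae)
  have hempty : U ∩ {x | eval x p ≠ 0} = ∅ :=
    ((hU.inter (isOpen_ne_fun (continuous_eval p) continuous_const)).measure_eq_zero_iff
      volume).mp hnull
  exact eq_zero_of_forall_mem_eval_eq_zero hU hne fun x hx =>
    not_not.mp fun h => hempty.subset ⟨hx, h⟩

end MvPolynomial

theorem exists_totalDegree_le_eval_eq_eval_affMap {m : ℕ} (A : Matrix (Fin m) (Fin m) ℝ)
    (b : Fin m → ℝ) (q : MvPolynomial (Fin m) ℝ) :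
    ∃ q' : MvPolynomial (Fin m) ℝ,
      q'.totalDegree ≤ q.totalDegree ∧ ∀ x, eval x q' = eval (affMap m A b x) q := by
  refine ⟨bind₁ (fun i => ∑ j, C (A i j) * (X j + C (b j))) q,
    totalDegree_bind₁_le (fun i => totalDegree_finsetSum_le fun j _ => ?_) q, fun x => ?_⟩
  · refine (totalDegree_mul _ _).trans ?_
    rw [totalDegree_C, zero_add]
    exact (totalDegree_add _ _).trans (by simp [totalDegree_X])
  · refine (eval₂Hom_bind₁ _ _ _ q).trans (congrArg (fun y => eval y q) (funext fun i => ?_))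
    simp [affMap, mulVec, dotProduct]

theorem PkSet_eq_image (m k : ℕ) :
    PkSet m k = evalₗ ℝ (Fin m) '' restrictTotalDegree (Fin m) ℝ k := by
  ext g
  simp only [PkSet, Set.mem_ofPred_eq, Set.mem_image, SetLike.mem_coe, mem_restrictTotalDegree]
  refine exists_congr fun p => and_congr_right fun _ => ?_
  rw [eq_comm, funext_iff]
  rfl

theorem PiK_eq_image {m : ℕ} {f : (Fin m → ℝ) → ℝ}
    {hmom : ∀ N : ℕ, Integrable fun x : Fin m → ℝ => ‖x‖ ^ N * f x}
    (hB : (momentForm hmom).toQuadraticMap.Anisotropic) (k : ℕ) :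
    PiK m f k =
      evalₗ ℝ (Fin m) '' (momentForm hmom).orthogonalLayer (restrictTotalDegree (Fin m) ℝ) k := by
  induction k using Nat.strong_induction_on with
  | _ k ih =>
  cases k with
  | zero => rw [PiK]; exact PkSet_eq_image m 0
  | succ k =>
  have hP := restrictTotalDegree_mono (Fin m) ℝ
  rw [PiK, PkSet_eq_image]
  ext g
  constructor
  · rintro ⟨⟨p, hp, rfl⟩, hortho⟩
    refine ⟨p, ⟨hp, (LinearMap.BilinForm.mem_orthogonal_iff_forall_orthogonalLayer hB hP).mpr
      fun j hj q hq => ?_⟩, rfl⟩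
    have hqPi : evalₗ ℝ (Fin m) q ∈ PiK m f j := (ih j (by omega)).symm ▸ ⟨q, hq, rfl⟩
    have := hortho j (by omega) _ hqPi 1 (by simp) 0
    rw [momentForm_apply, ← this]
    congr 1; funext x
    simp [affMap, mul_comm]
  · rintro ⟨p, ⟨hp, hpO⟩, rfl⟩
    refine ⟨⟨p, hp, rfl⟩, fun j hj _ hq A _ b => ?_⟩
    rw [ih j hj] at hq
    obtain ⟨q, hq, rfl⟩ := hq
    obtain ⟨q', hdeg, hq'⟩ := exists_totalDegree_le_eval_eq_eval_affMap A b q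
    have hq'k : q' ∈ restrictTotalDegree (Fin m) ℝ k :=
      hP (Nat.le_of_lt_succ hj) ((mem_restrictTotalDegree _ _ _).mpr
        (hdeg.trans ((mem_restrictTotalDegree _ _ _).mp
          (LinearMap.BilinForm.orthogonalLayer_le _ j hq))))
    rw [← hpO q' hq'k, momentForm_apply]
    congr 1; funext x
    rw [evalₗ_apply, evalₗ_apply, ← hq']
    ring

theorem ellDensity_nonneg {m : ℕ} {φ : ℝ → ℝ} (hφ : ∀ y, 0 ≤ φ y)
    (hI : 0 ≤ ∫ y in Set.Ioi (0 : ℝ), y ^ ((m : ℝ) / 2 - 1) * φ y)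
    (μ : Fin m → ℝ) (V : Matrix (Fin m) (Fin m) ℝ) (x : Fin m → ℝ) :
    0 ≤ ellDensity m φ μ V x := by
  have hcm : 0 ≤ cm m φ :=
    div_nonneg (Real.Gamma_nonneg_of_nonneg (by positivity))
      (mul_nonneg (Real.rpow_nonneg Real.pi_pos.le _) hI)
  exact mul_nonneg (mul_nonneg hcm (Real.sqrt_nonneg _)) (hφ _)

theorem IsNiceElliptical.nonneg {m : ℕ} {f : (Fin m → ℝ) → ℝ} (hf : IsNiceElliptical m f)
    (x : Fin m → ℝ) : 0 ≤ f x := by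
  obtain ⟨⟨μ, V, φ, -, -, hφ, -, hI, rfl⟩, -⟩ := hf
  exact ellDensity_nonneg hφ hI.le μ V x

theorem statement4_general (m : ℕ) (f : (Fin m → ℝ) → ℝ)
    (hf : IsNiceElliptical m f) (k : ℕ) :
    Module.finrank ℝ (Submodule.span ℝ (PiK m f k)) = (m + k - 1).choose k := by
  obtain ⟨-, hmom, U, hU, hne, hpos⟩ := id hf
  have hB := momentForm_anisotropic hmom hf.nonneg hU hne hpos
  rw [PiK_eq_image hB, Submodule.span_image, Submodule.span_eq,
    ← (Submodule.equivMapOfInjective _ (evalₗ_injective _) _).finrank_eq]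
  cases k with
  | zero =>
    change finrank ℝ (restrictTotalDegree (Fin m) ℝ 0) = _
    simp [finrank_restrictTotalDegree]
  | succ k =>
    have hlayer := LinearMap.BilinForm.finrank_orthogonalLayer_succ_add hB
      (restrictTotalDegree_mono (Fin m) ℝ) k
    rw [finrank_restrictTotalDegree_succ, Fintype.card_fin] at hlayer
    rw [Nat.add_succ_sub_one]
    omega

/-- For every `k ≥ 0`, the dimension of `Π_k` equals the binomial
coefficient `C(m + k − 1, k)`. (Since `Π_k` is a linear subspace, its span coincides
with it, so the dimension of `Π_k` is the rank of the span of `Π_k`.) -/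
theorem statement4 (m : ℕ) (hm : 1 ≤ m) (f : (Fin m → ℝ) → ℝ)
    (hf : IsNiceElliptical m f) (k : ℕ) :
    Module.finrank ℝ (Submodule.span ℝ (PiK m f k)) = (m + k - 1).choose k :=
  statement4_general m f hf k

end
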